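/- (Theorem 4.5, 'moreover' part.) Let M be a left A-module, ε : A^{t'+t''} → M a surjective A-linear map, F = fromBlocks(F',0,U,F'') ∈ M_{(s'+s'')×(t'+t'')}(A) an admissible matrix, and suppose the pair (·F : A^{s'+s''} → A^{t'+t''}, ε) is exact. Let M' := { ε(Y',0) : Y' ∈ A^{t'} } (a submodule of M), let M'' := M/M' with quotient map π : M → M'', and define ε' : A^{t'} → M', Y' ↦ ε(Y',0), and ε'' : A^{t''} → M'', Y'' ↦ π(ε(0,Y'')). Then: (a) ε' is surjective onto M' and the pair (·F' : A^{s'} → A^{t'}, ε') is exact; (b) ε'' is surjective and the pair (·F'' : A^{s''} → A^{t''}, ε'') is exact. In particular there is a short exact sequence 0 → M' → M → M'' → 0. -/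

import Mathlib

/-!
Everything is read off the block form `(X', X'') · F = (X' F' + X'' U, X'' F'')`.
The image of `·F` meets `A^{t'} × 0` exactly in `im (·F') × 0`, because admissibility absorbs
`X'' U` into `im (·F')`; and the projection of `im (·F)` to `A^{t''}` is `im (·F'')`, which together
with `ε (Y', Y'') = ε (Y', 0) + ε (0, Y'')` gives the exactness of `(·F'', ε'')`.
-/

/-- The left A-linear map `A^{t'} → A^{t' ⊕ t''}`, `Y' ↦ (Y', 0)`. -/
def elimLeft (A : Type*) [Ring A] (t' t'' : ℕ) :
    (Fin t' → A) →ₗ[A] (Fin t' ⊕ Fin t'' → A) where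
  toFun Y := Sum.elim Y 0
  map_add' Y Z := by funext x; cases x <;> simp
  map_smul' a Y := by funext x; cases x <;> simp

namespace Matrix

variable {A : Type*} [NonUnitalNonAssocSemiring A] {m' m'' n' n'' : Type*}
  [Fintype m'] [Fintype m'']

theorem sumElim_vecMul_fromBlocks_zero (F' : Matrix m' n' A) (U : Matrix m'' n' A)
    (F'' : Matrix m'' n'' A) (X' : m' → A) (X'' : m'' → A) :
    Sum.elim X' X'' ᵥ* fromBlocks F' 0 U F'' = Sum.elim (X' ᵥ* F' + X'' ᵥ* U) (X'' ᵥ* F'') := by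
  simp [vecMul_fromBlocks]

theorem exists_vecMul_fromBlocks_eq_sumElim_zero_iff {F' : Matrix m' n' A}
    {U : Matrix m'' n' A} (F'' : Matrix m'' n'' A)
    (hadm : ∀ X'' : m'' → A, ∃ X' : m' → A, X'' ᵥ* U = X' ᵥ* F') (Y' : n' → A) :
    (∃ X, X ᵥ* fromBlocks F' 0 U F'' = Sum.elim Y' 0) ↔ ∃ X', X' ᵥ* F' = Y' := by
  constructor
  · rintro ⟨X, hX⟩
    rw [← Sum.elim_comp_inl_inr X, sumElim_vecMul_fromBlocks_zero, Sum.elim_eq_iff] at hX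
    obtain ⟨X₀, hX₀⟩ := hadm (X ∘ Sum.inr)
    exact ⟨X ∘ Sum.inl + X₀, by rw [add_vecMul, ← hX₀, hX.1]⟩
  · rintro ⟨X', rfl⟩
    exact ⟨Sum.elim X' 0, by simp [sumElim_vecMul_fromBlocks_zero]⟩

theorem exists_vecMul_fromBlocks_eq_sumElim_iff (F' : Matrix m' n' A) (U : Matrix m'' n' A)
    (F'' : Matrix m'' n'' A) (Y'' : n'' → A) :
    (∃ Y' X, X ᵥ* fromBlocks F' 0 U F'' = Sum.elim Y' Y'') ↔ ∃ X'', X'' ᵥ* F'' = Y'' := by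
  constructor
  · rintro ⟨Y', X, hX⟩
    rw [← Sum.elim_comp_inl_inr X, sumElim_vecMul_fromBlocks_zero, Sum.elim_eq_iff] at hX
    exact ⟨X ∘ Sum.inr, hX.2⟩
  · rintro ⟨X'', rfl⟩
    exact ⟨X'' ᵥ* U, Sum.elim 0 X'', by simp [sumElim_vecMul_fromBlocks_zero]⟩

end Matrix

section

variable {A : Type*} [Ring A] {M : Type*} [AddCommGroup M] [Module A M]

theorem LinearMap.map_sumElim_eq_add {n' n'' : Type*} (ε : (n' ⊕ n'' → A) →ₗ[A] M)
    (Y' : n' → A) (Y'' : n'' → A) :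
    ε (Sum.elim Y' Y'') = ε (Sum.elim Y' 0) + ε (Sum.elim 0 Y'') := by
  rw [← map_add, ← Sum.elim_add_add, add_zero, zero_add]

variable {t' t'' : ℕ} (ε : (Fin t' ⊕ Fin t'' → A) →ₗ[A] M)

theorem elimLeft_apply (Y' : Fin t' → A) : elimLeft A t' t'' Y' = Sum.elim Y' 0 := rfl

theorem exists_mkQ_range_elimLeft_sumElim_zero_eq (hsurj : Function.Surjective ε)
    (z : M ⧸ LinearMap.range (ε ∘ₗ elimLeft A t' t'')) :
    ∃ Y'', (LinearMap.range (ε ∘ₗ elimLeft A t' t'')).mkQ (ε (Sum.elim 0 Y'')) = z := by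
  obtain ⟨m, rfl⟩ := Submodule.mkQ_surjective _ z
  obtain ⟨Y, rfl⟩ := hsurj m
  refine ⟨Y ∘ Sum.inr, ?_⟩
  have hY := ε.map_sumElim_eq_add (Y ∘ Sum.inl) (Y ∘ Sum.inr)
  rw [Sum.elim_comp_inl_inr] at hY
  have hmem : ε (Sum.elim (Y ∘ Sum.inl) 0) ∈ LinearMap.range (ε ∘ₗ elimLeft A t' t'') :=
    ⟨Y ∘ Sum.inl, rfl⟩
  simp only [hY, map_add, Submodule.mkQ_apply, (Submodule.Quotient.mk_eq_zero _).2 hmem, zero_add]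

theorem mkQ_range_elimLeft_sumElim_zero_eq_zero_iff (Y'' : Fin t'' → A) :
    (LinearMap.range (ε ∘ₗ elimLeft A t' t'')).mkQ (ε (Sum.elim 0 Y'')) = 0 ↔
      ∃ Y', ε (Sum.elim Y' Y'') = 0 := by
  have hneg (Y' : Fin t' → A) : ε (Sum.elim (-Y') 0) = -ε (Sum.elim Y' 0) := by
    rw [← map_neg, ← Sum.elim_neg_neg, neg_zero]
  simp only [Submodule.mkQ_apply, Submodule.Quotient.mk_eq_zero, LinearMap.mem_range,
    LinearMap.comp_apply, elimLeft_apply]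
  constructor
  · rintro ⟨Y', hY'⟩
    refine ⟨-Y', ?_⟩
    rw [ε.map_sumElim_eq_add, ← hY', hneg, neg_add_cancel]
  · rintro ⟨Y', hY'⟩
    refine ⟨-Y', ?_⟩
    rw [ε.map_sumElim_eq_add, add_eq_zero_iff_neg_eq] at hY'
    rw [hneg, hY']

end

/-- Theorem 4.5, 'moreover' part: if `ε : A^{t'+t''} → M` is
surjective with `(·F, ε)` exact for an admissible `F = fromBlocks F' 0 U F''`,
then with `M' := ε(A^{t'} × 0)`, `M'' := M/M'`, `ε'(Y') := ε(Y',0)`,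
`ε''(Y'') := π(ε(0,Y''))`: (a) `ε'` is surjective onto `M'` and `(·F', ε')`
is exact; (b) `ε''` is surjective and `(·F'', ε'')` is exact; in particular
`0 → M' → M → M'' → 0` is a short exact sequence. -/
theorem resolution_decomposition_module {A : Type*} [Ring A] {s' s'' t' t'' : ℕ}
    (F' : Matrix (Fin s') (Fin t') A) (U : Matrix (Fin s'') (Fin t') A)
    (F'' : Matrix (Fin s'') (Fin t'') A)
    (hadm : ∀ X'' : Fin s'' → A, ∃ X' : Fin s' → A,
      Matrix.vecMul X'' U = Matrix.vecMul X' F')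
    {M : Type*} [AddCommGroup M] [Module A M]
    (ε : ((Fin t' ⊕ Fin t'') → A) →ₗ[A] M)
    (hsurj : Function.Surjective ε)
    (hexact : ∀ Y : Fin t' ⊕ Fin t'' → A,
      (∃ X : Fin s' ⊕ Fin s'' → A,
        Matrix.vecMul X (Matrix.fromBlocks F' 0 U F'') = Y) ↔ ε Y = 0) :
    letI M' : Submodule A M := LinearMap.range (ε ∘ₗ elimLeft A t' t'')
    -- (a) `ε'` is surjective onto `M'` and `(·F', ε')` is exact
    ((∀ m ∈ M', ∃ Y' : Fin t' → A, ε (Sum.elim Y' 0) = m) ∧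
      (∀ Y' : Fin t' → A,
        (∃ X' : Fin s' → A, Matrix.vecMul X' F' = Y') ↔ ε (Sum.elim Y' 0) = 0)) ∧
    -- (b) `ε''` is surjective and `(·F'', ε'')` is exact
    ((∀ z : M ⧸ M', ∃ Y'' : Fin t'' → A, M'.mkQ (ε (Sum.elim 0 Y'')) = z) ∧
      (∀ Y'' : Fin t'' → A,
        (∃ X'' : Fin s'' → A, Matrix.vecMul X'' F'' = Y'') ↔
          M'.mkQ (ε (Sum.elim 0 Y'')) = 0)) ∧
    -- the short exact sequence `0 → M' → M → M'' → 0`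
    (Function.Injective M'.subtype ∧ Function.Surjective M'.mkQ ∧
      LinearMap.ker M'.mkQ = M') := by
  refine ⟨⟨fun m hm => hm, fun Y' => ?_⟩, ⟨exists_mkQ_range_elimLeft_sumElim_zero_eq ε hsurj,
    fun Y'' => ?_⟩, Submodule.injective_subtype _, Submodule.mkQ_surjective _,
    Submodule.ker_mkQ _⟩
  · exact (Matrix.exists_vecMul_fromBlocks_eq_sumElim_zero_iff F'' hadm Y').symm.trans
      (hexact _)
  · rw [mkQ_range_elimLeft_sumElim_zero_eq_zero_iff,
      ← Matrix.exists_vecMul_fromBlocks_eq_sumElim_iff F' U F'']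
    exact exists_congr fun Y' => hexact _
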